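/- arXiv:2503.06210 — 3 statements merged into one kernel-verified Lean document; each statement's English description precedes it below -/
import Mathlib

section
/- For every positive integer q, Σ_{d | q} (μ(d)/d) · log d = −(φ(q)/q) · Σ_{p | q} (log p)/(p−1), where the last sum is over primes p dividing q. -/
/-!
Write `F n = ∑_{d ∣ n} μ(d)/d` and `L n = ∑_{d ∣ n} μ(d)/d · log d`. Since `d ↦ μ(d)/d` is
multiplicative and `log` is additive, `L (a b) = L a · F b + F a · L b` for coprime `a, b`, so
`L / F` is additive over coprime factors. On a prime power only `d = 1` and `d = p` contribute,
giving `F (p^k) = 1 - 1/p` and `L (p^k) = -(log p)/p = -F (p^k) · log p / (p - 1)`.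
Finally `F n = φ(n)/n` by the same multiplicative induction.
-/

open Finset ArithmeticFunction
open scoped ArithmeticFunction.Moebius Nat

theorem Nat.Coprime.sum_divisors_mul_eq_sum_sum {M : Type*} [AddCommMonoid M] (F : ℕ → M)
    {m n : ℕ} (hmn : m.Coprime n) :
    ∑ d ∈ (m * n).divisors, F d = ∑ a ∈ m.divisors, ∑ b ∈ n.divisors, F (a * b) := by
  rw [hmn.divisors_mul, sum_map, ← sum_product']
  exact sum_attach _ fun p : ℕ × ℕ ↦ F (p.1 * p.2)

theorem Nat.Coprime.coprime_of_mem_divisors {m n a b : ℕ} (hmn : m.Coprime n)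
    (ha : a ∈ m.divisors) (hb : b ∈ n.divisors) : a.Coprime b :=
  (hmn.coprime_dvd_left (Nat.dvd_of_mem_divisors ha)).coprime_dvd_right
    (Nat.dvd_of_mem_divisors hb)

theorem sum_divisors_mul_of_coprime {R : Type*} [CommSemiring R] {f : ℕ → R}
    (hf : ∀ {a b : ℕ}, a.Coprime b → f (a * b) = f a * f b) {m n : ℕ} (hmn : m.Coprime n) :
    ∑ d ∈ (m * n).divisors, f d = (∑ a ∈ m.divisors, f a) * ∑ b ∈ n.divisors, f b := by
  rw [hmn.sum_divisors_mul_eq_sum_sum, sum_mul_sum]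
  exact sum_congr rfl fun a ha ↦ sum_congr rfl fun b hb ↦ hf (hmn.coprime_of_mem_divisors ha hb)

theorem sum_divisors_mul_log_of_coprime {f : ℕ → ℝ}
    (hf : ∀ {a b : ℕ}, a.Coprime b → f (a * b) = f a * f b) {m n : ℕ} (hmn : m.Coprime n) :
    ∑ d ∈ (m * n).divisors, f d * Real.log d =
      (∑ a ∈ m.divisors, f a * Real.log a) * (∑ b ∈ n.divisors, f b) +
        (∑ a ∈ m.divisors, f a) * ∑ b ∈ n.divisors, f b * Real.log b := by
  rw [hmn.sum_divisors_mul_eq_sum_sum, sum_mul_sum, sum_mul_sum, ← sum_add_distrib]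
  refine sum_congr rfl fun a ha ↦ ?_
  rw [← sum_add_distrib]
  refine sum_congr rfl fun b hb ↦ ?_
  have ha0 : (a : ℝ) ≠ 0 := Nat.cast_ne_zero.2 (Nat.ne_of_gt (Nat.pos_of_mem_divisors ha))
  have hb0 : (b : ℝ) ≠ 0 := Nat.cast_ne_zero.2 (Nat.ne_of_gt (Nat.pos_of_mem_divisors hb))
  rw [hf (hmn.coprime_of_mem_divisors ha hb), Nat.cast_mul, Real.log_mul ha0 hb0]
  ring

theorem moebius_div_mul_of_coprime {a b : ℕ} (hab : a.Coprime b) :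
    (μ (a * b) : ℝ) / (a * b : ℕ) = (μ a / a) * (μ b / b) := by
  rw [isMultiplicative_moebius.map_mul_of_coprime hab]
  push_cast
  ring

theorem sum_divisors_prime_pow_moebius_mul {R : Type*} [CommRing R] (g : ℕ → R) {p k : ℕ}
    (hp : p.Prime) (hk : k ≠ 0) :
    ∑ d ∈ (p ^ k).divisors, (μ d : R) * g d = g 1 - g p := by
  obtain ⟨j, rfl⟩ := Nat.exists_eq_add_one_of_ne_zero hk
  have hvanish : ∀ i ∈ range j, (μ (p ^ (i + 1 + 1)) : R) * g (p ^ (i + 1 + 1)) = 0 := by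
    intro i _
    simp [moebius_apply_prime_pow hp (Nat.succ_ne_zero _)]
  rw [Nat.sum_divisors_prime_pow hp, sum_range_succ', sum_range_succ', sum_eq_zero hvanish]
  simp [moebius_apply_prime hp]
  ring

theorem sum_divisors_moebius_div {n : ℕ} (hn : n ≠ 0) :
    ∑ d ∈ n.divisors, (μ d : ℝ) / d = φ n / n := by
  induction n using Nat.recOnPosPrimePosCoprime with
  | zero => exact absurd rfl hn
  | one => simp
  | prime_pow p k hp hk =>
    have hp0 : (p : ℝ) ≠ 0 := Nat.cast_ne_zero.2 hp.ne_zero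
    simp_rw [div_eq_mul_inv (μ _ : ℝ)]
    rw [sum_divisors_prime_pow_moebius_mul _ hp hk.ne', Nat.totient_prime_pow hp hk]
    obtain ⟨j, rfl⟩ := Nat.exists_eq_add_one_of_ne_zero hk.ne'
    push_cast [Nat.cast_sub hp.one_le]
    field_simp
    ring
  | coprime a b ha hb hab iha ihb =>
    rw [sum_divisors_mul_of_coprime moebius_div_mul_of_coprime hab, iha (by omega),
      ihb (by omega), Nat.totient_mul hab]
    push_cast
    ring

theorem sum_divisors_moebius_div_mul_log (n : ℕ) :
    ∑ d ∈ n.divisors, (μ d : ℝ) / d * Real.log d =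
      -((∑ d ∈ n.divisors, (μ d : ℝ) / d) * ∑ p ∈ n.primeFactors, Real.log p / (p - 1)) := by
  induction n using Nat.recOnPosPrimePosCoprime with
  | zero => simp
  | one => simp
  | prime_pow p k hp hk =>
    have hp0 : (p : ℝ) ≠ 0 := Nat.cast_ne_zero.2 hp.ne_zero
    have hp1 : (p : ℝ) - 1 ≠ 0 := sub_ne_zero.2 (Nat.cast_ne_one.2 hp.ne_one)
    simp_rw [div_mul_eq_mul_div, mul_div_assoc, div_eq_mul_inv (μ _ : ℝ)]
    rw [sum_divisors_prime_pow_moebius_mul _ hp hk.ne',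
      sum_divisors_prime_pow_moebius_mul _ hp hk.ne', Nat.primeFactors_prime_pow hk.ne' hp,
      sum_singleton]
    field_simp
    simp
  | coprime a b _ _ hab iha ihb =>
    rw [sum_divisors_mul_log_of_coprime moebius_div_mul_of_coprime hab,
      sum_divisors_mul_of_coprime moebius_div_mul_of_coprime hab, iha, ihb,
      hab.primeFactors_mul, sum_union hab.disjoint_primeFactors]
    ring

theorem stmt_3 (q : ℕ) (hq : 0 < q) :
    (∑ d ∈ q.divisors, ((ArithmeticFunction.moebius d : ℝ) / d) * Real.log d) =
      -(((Nat.totient q : ℝ) / q) * ∑ p ∈ q.primeFactors, Real.log p / (p - 1)) := by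
  rw [sum_divisors_moebius_div_mul_log, sum_divisors_moebius_div hq.ne']
end

section
/- For every positive integer q, (1/q) · Σ_{1 ≤ k ≤ q, gcd(k,q)=1} (−ψ(k/q) − γ) = (φ(q)/q) · (log q + Σ_{p | q} (log p)/(p−1)), where ψ is the digamma function, γ is Euler's constant, φ is Euler's totient, and the sum Σ_{p | q} is over primes dividing q. -/
/-!
Telescoping the series for `ψ` gives the logarithmic form of Gauss's multiplication formula,
`∑_{k=1}^m (-ψ(k/m) - γ) = m log m`: the partial sums are `m (H_{mN} - H_N) → m log m`.
Möbius inversion over `gcd(k, q)` turns the sum over reduced fractions into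
`∑_{d ∣ q} μ(d) (q/d) log(q/d) = φ(q) log q - ∑_{d ∣ q} μ(d) (q/d) log d`. For squarefree `d`,
`log d = ∑_{p ∣ d} log p`, and for each prime `p ∣ q` the divisors not divisible by `p` contribute
`∑ μ(d) q/d = p^a φ(q/p^a) = p φ(q)/(p-1)` (with `p^a ∥ q`), so those divisible by `p` contribute
`-φ(q)/(p-1)`.
-/

open Finset Real

noncomputable def digamma (z : ℝ) : ℝ :=
  -Real.eulerMascheroniConstant - ∑' n : ℕ, (1 - z) / ((n + z) * (n + 1))

open Filter Topology
open scoped ArithmeticFunction.Moebius ArithmeticFunction.zeta Nat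

theorem summable_inv_add_sub_inv_add_one {z : ℝ} (hz : 0 ≤ z) :
    Summable fun n : ℕ => ((n : ℝ) + z)⁻¹ - ((n : ℝ) + 1)⁻¹ := by
  refine .of_norm_bounded_eventually_nat
    ((summable_one_div_nat_pow.mpr one_lt_two).mul_left |1 - z|) ?_
  filter_upwards [eventually_ge_atTop 1] with n hn
  have hn : (1 : ℝ) ≤ n := by exact_mod_cast hn
  have hnz : 0 < (n : ℝ) + z := by linarith
  rw [inv_sub_inv hnz.ne' (by linarith), Real.norm_eq_abs, abs_div,
    abs_of_pos (mul_pos hnz (by linarith)), show (n : ℝ) + 1 - (n + z) = 1 - z by ring,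
    ← div_eq_mul_one_div, sq]
  gcongr <;> linarith

theorem neg_digamma_sub_eulerMascheroniConstant {z : ℝ} (hz : 0 < z) :
    -digamma z - eulerMascheroniConstant = ∑' n : ℕ, (((n : ℝ) + z)⁻¹ - ((n : ℝ) + 1)⁻¹) := by
  rw [digamma, neg_sub, sub_neg_eq_add, add_sub_cancel_right]
  refine tsum_congr fun n => ?_
  rw [inv_sub_inv (by positivity) (by positivity)]
  ring

theorem harmonic_add_sub_harmonic (a b : ℕ) :
    (harmonic (a + b) : ℝ) - harmonic a = ∑ i ∈ Icc 1 b, ((a + i : ℕ) : ℝ)⁻¹ := by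
  induction b with
  | zero => simp
  | succ b ih =>
    rw [← add_assoc, harmonic_succ, sum_Icc_succ_top (by omega), ← ih]
    push_cast
    ring

theorem sum_Icc_inv_add_div (m n : ℕ) (hm : 0 < m) :
    ∑ k ∈ Icc 1 m, ((n : ℝ) + k / m)⁻¹ = m * (harmonic (m * (n + 1)) - harmonic (m * n) : ℝ) := by
  rw [mul_add_one, harmonic_add_sub_harmonic, mul_sum]
  refine sum_congr rfl fun k _ => ?_
  have : (m : ℝ) ≠ 0 := by exact_mod_cast hm.ne'
  push_cast
  field_simp

theorem tendsto_mul_harmonic_mul_sub_harmonic (m : ℕ) (hm : 0 < m) :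
    Tendsto (fun N : ℕ => m * (harmonic (m * N) - harmonic N : ℝ)) atTop (𝓝 (m * log m)) := by
  have hmN : Tendsto (fun N : ℕ => m * N) atTop atTop :=
    tendsto_id.const_mul_atTop' hm
  have hlim := ((tendsto_harmonic_sub_log.comp hmN).sub tendsto_harmonic_sub_log).add_const
    (log m) |>.const_mul (m : ℝ)
  rw [sub_self, zero_add] at hlim
  refine hlim.congr' ?_
  filter_upwards [eventually_ge_atTop 1] with N hN
  have hm' : (m : ℝ) ≠ 0 := by exact_mod_cast hm.ne'
  have hN' : (N : ℝ) ≠ 0 := by exact_mod_cast (by omega : N ≠ 0)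
  simp only [Function.comp_apply, Nat.cast_mul, log_mul hm' hN']
  ring

theorem sum_Icc_neg_digamma_sub_eulerMascheroniConstant (m : ℕ) (hm : 0 < m) :
    ∑ k ∈ Icc 1 m, (-digamma (k / m) - eulerMascheroniConstant) = m * log m := by
  have hpos : ∀ k ∈ Icc 1 m, 0 < (k : ℝ) / m := fun k hk => by
    have : 0 < k := (mem_Icc.mp hk).1
    positivity
  set f : ℕ → ℕ → ℝ := fun k n => ((n : ℝ) + k / m)⁻¹ - ((n : ℝ) + 1)⁻¹
  have hf : ∀ k ∈ Icc 1 m, Summable (f k) := fun k hk =>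
    summable_inv_add_sub_inv_add_one (hpos k hk).le
  set a : ℕ → ℝ := fun N => m * (harmonic (m * N) - harmonic N : ℝ)
  have hstep : ∀ n, ∑ k ∈ Icc 1 m, f k n = a (n + 1) - a n := fun n => by
    simp only [f, a, sum_sub_distrib, sum_Icc_inv_add_div m n hm, sum_const,
      Nat.card_Icc, add_tsub_cancel_right, nsmul_eq_mul, harmonic_succ]
    push_cast
    ring
  have hpartial : ∀ N, ∑ n ∈ range N, ∑ k ∈ Icc 1 m, f k n = a N := fun N => by
    rw [sum_congr rfl fun n _ => hstep n, sum_range_sub]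
    simp [a]
  calc ∑ k ∈ Icc 1 m, (-digamma (k / m) - eulerMascheroniConstant)
      = ∑ k ∈ Icc 1 m, ∑' n, f k n :=
        sum_congr rfl fun k hk => neg_digamma_sub_eulerMascheroniConstant (hpos k hk)
    _ = ∑' n, ∑ k ∈ Icc 1 m, f k n := (Summable.tsum_finsetSum hf).symm
    _ = m * log m := tendsto_nhds_unique (summable_sum hf).tendsto_sum_tsum_nat
        (by simpa only [hpartial] using tendsto_mul_harmonic_mul_sub_harmonic m hm)

theorem sum_Icc_filter_dvd {M : Type*} [AddCommMonoid M] (f : ℕ → M) {d : ℕ} (hd : 0 < d)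
    (q : ℕ) : ∑ k ∈ Icc 1 q with d ∣ k, f k = ∑ j ∈ Icc 1 (q / d), f (d * j) := by
  refine sum_nbij' (· / d) (d * ·) ?_ ?_ ?_ ?_ ?_
  · rintro k hk
    simp only [mem_filter, mem_Icc] at hk ⊢
    obtain ⟨⟨hk1, hkq⟩, j, rfl⟩ := hk
    rw [Nat.mul_div_cancel_left j hd, Nat.le_div_iff_mul_le hd, mul_comm]
    exact ⟨by nlinarith, hkq⟩
  · rintro j hj
    simp only [mem_filter, mem_Icc] at hj ⊢
    rw [Nat.le_div_iff_mul_le hd, mul_comm] at hj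
    exact ⟨⟨by nlinarith, hj.2⟩, dvd_mul_right d j⟩
  · rintro k hk
    exact Nat.mul_div_cancel' (mem_filter.mp hk).2
  · rintro j -
    exact Nat.mul_div_cancel_left j hd
  · rintro k hk
    rw [Nat.mul_div_cancel' (mem_filter.mp hk).2]

theorem sum_divisors_moebius (n : ℕ) :
    ∑ d ∈ n.divisors, μ d = if n = 1 then 1 else 0 := by
  rw [← ArithmeticFunction.coe_mul_zeta_apply, ArithmeticFunction.moebius_mul_coe_zeta,
    ArithmeticFunction.one_apply]

theorem sum_filter_coprime_eq_sum_divisors_moebius {M : Type*} [AddCommGroup M] (f : ℕ → M)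
    (q : ℕ) : ∑ k ∈ Icc 1 q with k.gcd q = 1, f k
      = ∑ d ∈ q.divisors, μ d • ∑ j ∈ Icc 1 (q / d), f (d * j) := by
  calc ∑ k ∈ Icc 1 q with k.gcd q = 1, f k
      = ∑ k ∈ Icc 1 q, ∑ d ∈ (k.gcd q).divisors, μ d • f k := by
        rw [sum_filter]
        refine sum_congr rfl fun k _ => ?_
        rw [← sum_smul, sum_divisors_moebius]
        split_ifs <;> simp
    _ = ∑ d ∈ q.divisors, ∑ k ∈ Icc 1 q with d ∣ k, μ d • f k := by
        refine sum_comm' fun k d => ?_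
        simp only [mem_Icc, Nat.mem_divisors, Nat.dvd_gcd_iff, mem_filter]
        constructor
        · rintro ⟨hk, ⟨hdk, hdq⟩, -⟩
          exact ⟨⟨hk, hdk⟩, hdq, by omega⟩
        · rintro ⟨⟨hk, hdk⟩, hdq, -⟩
          exact ⟨hk, ⟨hdk, hdq⟩, Nat.gcd_ne_zero_left (by omega)⟩
    _ = ∑ d ∈ q.divisors, μ d • ∑ j ∈ Icc 1 (q / d), f (d * j) :=
        sum_congr rfl fun d hd => by
          rw [← smul_sum, sum_Icc_filter_dvd f (Nat.pos_of_mem_divisors hd)]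

theorem sum_divisors_moebius_mul_div (n : ℕ) :
    ∑ d ∈ n.divisors, μ d * (n / d : ℕ) = φ n := by
  rcases n.eq_zero_or_pos with rfl | hn
  · simp
  rw [← Nat.sum_divisorsAntidiagonal (fun d e => μ d * (e : ℤ))]
  refine (ArithmeticFunction.sum_eq_iff_sum_mul_moebius_eq (R := ℤ) (f := fun n => φ n)).mp
    (fun n _ => ?_) n hn
  exact_mod_cast Nat.sum_totient n

theorem Nat.divisors_filter_not_dvd {p q : ℕ} (hp : p.Prime) (hq : q ≠ 0) :
    {d ∈ q.divisors | ¬p ∣ d} = (ordCompl[p] q).divisors := by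
  ext d
  simp only [mem_filter, Nat.mem_divisors]
  constructor
  · rintro ⟨⟨hdq, -⟩, hpd⟩
    refine ⟨?_, (Nat.ordCompl_pos p hq).ne'⟩
    have hcop : d.Coprime (ordProj[p] q) := ((hp.coprime_iff_not_dvd.mpr hpd).symm).pow_right _
    exact hcop.dvd_of_dvd_mul_left ((Nat.ordProj_mul_ordCompl_eq_self q p).symm ▸ hdq)
  · rintro ⟨hdm, -⟩
    exact ⟨⟨hdm.trans (Nat.ordCompl_dvd q p), hq⟩,
      fun hpd => Nat.not_dvd_ordCompl hp hq (hpd.trans hdm)⟩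

theorem sum_divisors_filter_not_dvd_moebius_mul_div {p q : ℕ} (hp : p.Prime) (hq : q ≠ 0) :
    ∑ d ∈ q.divisors with ¬p ∣ d, μ d * (q / d : ℕ) = ordProj[p] q * φ (ordCompl[p] q) := by
  rw [Nat.divisors_filter_not_dvd hp hq, ← sum_divisors_moebius_mul_div, mul_sum]
  refine sum_congr rfl fun d hd => ?_
  nth_rw 1 [← Nat.ordProj_mul_ordCompl_eq_self q p]
  rw [Nat.mul_div_assoc _ (Nat.dvd_of_mem_divisors hd)]
  push_cast
  ring

theorem sum_divisors_filter_dvd_moebius_mul_div {p q : ℕ} (hp : p.Prime) (hpq : p ∣ q)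
    (hq : q ≠ 0) : ((p : ℤ) - 1) * ∑ d ∈ q.divisors with p ∣ d, μ d * (q / d : ℕ) = -φ q := by
  obtain ⟨a, ha⟩ := Nat.exists_eq_add_of_lt (hp.factorization_pos_of_dvd hq hpq)
  have htot : φ q = p ^ a * (p - 1) * φ (ordCompl[p] q) := by
    conv_lhs => rw [← Nat.ordProj_mul_ordCompl_eq_self q p]
    rw [Nat.totient_mul ((Nat.coprime_ordCompl hp hq).pow_left _),
      Nat.totient_prime_pow hp (by omega), ha]
    simp
  have hsplit := sum_filter_add_sum_filter_not q.divisors (p ∣ ·) fun d => μ d * (q / d : ℕ)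
  rw [sum_divisors_moebius_mul_div, sum_divisors_filter_not_dvd_moebius_mul_div hp hq] at hsplit
  rw [eq_sub_of_add_eq hsplit, htot, ha]
  push_cast [hp.one_le]
  ring

theorem moebius_mul_log_eq_moebius_mul_sum_primeFactors (d : ℕ) :
    (μ d : ℝ) * log d = μ d * ∑ p ∈ d.primeFactors, log p := by
  by_cases hd : Squarefree d
  · rw [← log_prod fun p hp => Nat.cast_ne_zero.mpr (Nat.prime_of_mem_primeFactors hp).ne_zero,
      ← Nat.cast_prod, Nat.prod_primeFactors_of_squarefree hd]
  · simp [ArithmeticFunction.moebius_eq_zero_of_not_squarefree hd]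

theorem sum_divisors_moebius_mul_div_mul_log (q : ℕ) :
    ∑ d ∈ q.divisors, (μ d : ℝ) * (q / d : ℕ) * log d
      = -φ q * ∑ p ∈ q.primeFactors, log p / (p - 1) := by
  calc ∑ d ∈ q.divisors, (μ d : ℝ) * (q / d : ℕ) * log d
      = ∑ d ∈ q.divisors, ∑ p ∈ d.primeFactors, (μ d : ℝ) * (q / d : ℕ) * log p := by
        refine sum_congr rfl fun d _ => ?_
        rw [mul_right_comm, moebius_mul_log_eq_moebius_mul_sum_primeFactors, mul_sum, sum_mul]
        exact sum_congr rfl fun p _ => by ring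
    _ = ∑ p ∈ q.primeFactors, ∑ d ∈ q.divisors with p ∣ d, (μ d : ℝ) * (q / d : ℕ) * log p := by
        refine sum_comm' fun d p => ?_
        simp only [Nat.mem_divisors, Nat.mem_primeFactors, mem_filter]
        constructor
        · rintro ⟨⟨hdq, hq⟩, hp, hpd, -⟩
          exact ⟨⟨⟨hdq, hq⟩, hpd⟩, hp, hpd.trans hdq, hq⟩
        · rintro ⟨⟨⟨hdq, hq⟩, hpd⟩, hp, -⟩
          exact ⟨⟨hdq, hq⟩, hp, hpd, fun hd => hq (Nat.eq_zero_of_zero_dvd (hd ▸ hdq))⟩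
    _ = -φ q * ∑ p ∈ q.primeFactors, log p / (p - 1) := by
        rw [mul_sum]
        refine sum_congr rfl fun p hp => ?_
        obtain ⟨hp, hpq, hq⟩ := Nat.mem_primeFactors.mp hp
        have hp1 : (p : ℝ) - 1 ≠ 0 := sub_ne_zero.mpr (by exact_mod_cast hp.one_lt.ne')
        have key := congrArg (Int.cast (R := ℝ)) (sum_divisors_filter_dvd_moebius_mul_div hp hpq hq)
        simp only [Int.cast_mul, Int.cast_sub, Int.cast_natCast, Int.cast_one, Int.cast_sum,
          Int.cast_neg] at key
        rw [← sum_mul]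
        field_simp
        linear_combination log p * key

theorem sum_divisors_moebius_mul_div_mul_log_div (q : ℕ) :
    ∑ d ∈ q.divisors, (μ d : ℝ) * ((q / d : ℕ) * log (q / d : ℕ))
      = φ q * (log q + ∑ p ∈ q.primeFactors, log p / (p - 1)) := by
  have hlog : ∀ d ∈ q.divisors, (μ d : ℝ) * ((q / d : ℕ) * log (q / d : ℕ))
      = log q * ((μ d : ℝ) * (q / d : ℕ)) - (μ d : ℝ) * (q / d : ℕ) * log d := fun d hd => by
    obtain ⟨hdq, hq⟩ := Nat.mem_divisors.mp hd
    have hd : (d : ℝ) ≠ 0 := Nat.cast_ne_zero.mpr (Nat.pos_of_mem_divisors hd).ne'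
    rw [Nat.cast_div hdq hd, log_div (Nat.cast_ne_zero.mpr hq) hd]
    ring
  have htot := congrArg (Int.cast (R := ℝ)) (sum_divisors_moebius_mul_div q)
  simp only [Int.cast_sum, Int.cast_mul, Int.cast_natCast] at htot
  rw [sum_congr rfl hlog, sum_sub_distrib, ← mul_sum, htot, sum_divisors_moebius_mul_div_mul_log]
  ring

theorem stmt_6_general (q : ℕ) :
    (1 / (q : ℝ)) * ∑ k ∈ (Finset.Icc 1 q).filter (fun k => Nat.gcd k q = 1),
        (-digamma (k / q) - Real.eulerMascheroniConstant) =
      ((Nat.totient q : ℝ) / q) *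
        (Real.log q + ∑ p ∈ q.primeFactors, Real.log p / (p - 1)) := by
  have hblock : ∀ d ∈ q.divisors,
      ∑ j ∈ Icc 1 (q / d), (-digamma ((d * j : ℕ) / q) - eulerMascheroniConstant)
        = (q / d : ℕ) * log (q / d : ℕ) := fun d hd => by
    obtain ⟨hdq, hq⟩ := Nat.mem_divisors.mp hd
    have hd : 0 < d := Nat.pos_of_mem_divisors hd
    have hrescale : ∀ j : ℕ, ((d * j : ℕ) : ℝ) / q = j / (q / d : ℕ) := fun j => by
      rw [Nat.cast_div hdq (by positivity)]
      field_simp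
      push_cast
      ring
    simp_rw [hrescale]
    exact sum_Icc_neg_digamma_sub_eulerMascheroniConstant _
      (Nat.div_pos (Nat.le_of_dvd (Nat.pos_of_ne_zero hq) hdq) hd)
  rw [sum_filter_coprime_eq_sum_divisors_moebius
      fun k => -digamma (k / q) - eulerMascheroniConstant,
    sum_congr rfl fun d hd => by rw [hblock d hd, zsmul_eq_mul],
    sum_divisors_moebius_mul_div_mul_log_div]
  ring

theorem stmt_6 (q : ℕ) (hq : 0 < q) :
    (1 / (q : ℝ)) * ∑ k ∈ (Finset.Icc 1 q).filter (fun k => Nat.gcd k q = 1),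
        (-digamma (k / q) - Real.eulerMascheroniConstant) =
      ((Nat.totient q : ℝ) / q) *
        (Real.log q + ∑ p ∈ q.primeFactors, Real.log p / (p - 1)) :=
  stmt_6_general q
end

section
/- For every non-principal Dirichlet character χ of modulus q ≥ 2, |L(1,χ)| < (φ(q)/q) · (log q + Σ_{p | q} (log p)/(p−1)), where the sum is over primes p dividing q. -/
/-
Group the series into the blocks `kq < n ≤ (k+1)q`. Since `χ` sums to zero over a period, the
`k`-th block equals `∑_{r ≤ q} χ(r) w_k(r)` with the nonnegative weights
`w_k(r) = 1/(kq+r) - 1/(kq+q)`, so `‖L‖ ≤ ∑_k ∑_{(r,q)=1} w_k(r)`. By Möbius inversion and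
`H(Km) - H(K) → log m` this bound equals `∑_{d ∣ q} μ(d)/d · log(q/d)`, which is the right-hand
side. The inequality is strict because in the first block the terms `r = 1` and `r = a` with
`χ(a) ≠ 1` do not point in the same direction.
-/

open Finset Real Filter
open scoped ArithmeticFunction.Moebius Topology

theorem tendsto_harmonic_mul_sub_harmonic {m : ℕ} (hm : m ≠ 0) :
    Tendsto (fun K : ℕ => (harmonic (K * m) : ℝ) - harmonic K) atTop (𝓝 (log m)) := by
  have hKm : Tendsto (fun K : ℕ => K * m) atTop atTop :=
    tendsto_id.atTop_mul_const' (Nat.pos_of_ne_zero hm)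
  have h := ((tendsto_harmonic_sub_log.comp hKm).sub tendsto_harmonic_sub_log).add_const (log m)
  rw [sub_self, zero_add] at h
  refine h.congr' ?_
  filter_upwards [eventually_ne_atTop 0] with K hK
  simp only [Function.comp_apply, Nat.cast_mul]
  rw [log_mul (by exact_mod_cast hK) (by exact_mod_cast hm)]
  ring

theorem sum_range_mul_eq_sum_sum {M : Type*} [AddCommMonoid M] (f : ℕ → M) (K m : ℕ) :
    ∑ n ∈ range (K * m), f n = ∑ k ∈ range K, ∑ r ∈ range m, f (k * m + r) := by
  induction K with
  | zero => simp
  | succ K ih => rw [Nat.succ_mul, sum_range_add, ih, sum_range_succ]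

theorem sum_range_filter_dvd_add_one {M : Type*} [AddCommMonoid M] (g : ℕ → M) (d N : ℕ) :
    ∑ j ∈ range N with d ∣ j + 1, g (j + 1) = ∑ s ∈ range (N / d), g (d * (s + 1)) := by
  induction N with
  | zero => simp
  | succ N ih =>
    rw [range_add_one, filter_insert, Nat.succ_div]
    split_ifs with h
    · have hN : d * (N / d + 1) = N + 1 := by
        rw [← Nat.mul_div_cancel' h, Nat.succ_div, if_pos h]
      rw [sum_insert (by simp), ih, sum_range_succ, hN, add_comm]
    · rw [ih, add_zero]

theorem norm_sum_le_sum_norm_sub_of_ne {ι E : Type*} [SeminormedAddCommGroup E] [DecidableEq ι]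
    {s : Finset ι} (f : ι → E) {i j : ι} (hi : i ∈ s) (hj : j ∈ s) (hij : i ≠ j) :
    ‖∑ l ∈ s, f l‖ ≤ ∑ l ∈ s, ‖f l‖ - (‖f i‖ + ‖f j‖ - ‖f i + f j‖) := by
  have hj' : j ∈ s.erase i := mem_erase.mpr ⟨hij.symm, hj⟩
  rw [← add_sum_erase s f hi, ← add_sum_erase _ f hj', ← add_sum_erase s _ hi,
    ← add_sum_erase _ (fun l => ‖f l‖) hj', ← add_assoc]
  have := norm_sum_le ((s.erase i).erase j) f
  have := norm_add_le (f i + f j) (∑ l ∈ (s.erase i).erase j, f l)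
  linarith

theorem Complex.not_sameRay_ofReal_mul {x y : ℝ} (hx : 0 < x) (hy : 0 < y) {z : ℂ}
    (hz : ‖z‖ = 1) (hz1 : z ≠ 1) : ¬ SameRay ℝ (x : ℂ) (z * y) := by
  intro h
  have h1 : SameRay ℝ (1 : ℂ) z := by
    convert (h.pos_smul_left (inv_pos.2 hx)).pos_smul_right (inv_pos.2 hy) using 1 <;>
      simp [Complex.real_smul, hx.ne', hy.ne', mul_comm z]
  exact hz1 (h1.eq_of_norm_eq (by rw [hz, norm_one])).symm

theorem ite_coprime_eq_sum_moebius {R : Type*} [Ring R] {q : ℕ} (hq : q ≠ 0) (r : ℕ) :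
    (if r.Coprime q then 1 else 0 : R) = ∑ d ∈ q.divisors with d ∣ r, (μ d : R) := by
  have hdiv : {d ∈ q.divisors | d ∣ r} = (r.gcd q).divisors := by
    ext d
    simp only [mem_filter, Nat.mem_divisors, Nat.dvd_gcd_iff, ne_eq, Nat.gcd_eq_zero_iff, hq,
      and_false, not_false_eq_true, and_true]
    tauto
  have h := congrArg (· (r.gcd q)) (ArithmeticFunction.coe_moebius_mul_coe_zeta (R := R))
  simp only [ArithmeticFunction.coe_mul_zeta_apply, ArithmeticFunction.intCoe_apply,
    ArithmeticFunction.one_apply] at h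
  rw [hdiv, h]

theorem sum_filter_coprime_eq_sum_moebius {R : Type*} [Ring R] {q : ℕ} (hq : q ≠ 0)
    (g : ℕ → R) : ∑ j ∈ range q with (j + 1).Coprime q, g (j + 1)
      = ∑ d ∈ q.divisors, (μ d : R) * ∑ s ∈ range (q / d), g (d * (s + 1)) := by
  calc ∑ j ∈ range q with (j + 1).Coprime q, g (j + 1)
      = ∑ j ∈ range q, ∑ d ∈ q.divisors, if d ∣ j + 1 then (μ d : R) * g (j + 1) else 0 := by
        rw [sum_filter]
        refine sum_congr rfl fun j _ => ?_
        rw [← boole_mul, ite_coprime_eq_sum_moebius hq, sum_mul, sum_filter]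
    _ = ∑ d ∈ q.divisors, (μ d : R) * ∑ s ∈ range (q / d), g (d * (s + 1)) := by
        rw [sum_comm]
        refine sum_congr rfl fun d _ => ?_
        rw [← sum_filter, ← mul_sum, sum_range_filter_dvd_add_one]

theorem sum_powerset_prod_mul_sum {ι K : Type*} [Field K] [DecidableEq ι] (t : Finset ι)
    (x y : ι → K) (hx : ∀ i ∈ t, 1 + x i ≠ 0) :
    ∑ S ∈ t.powerset, (∏ i ∈ S, x i) * ∑ i ∈ S, y i
      = (∏ i ∈ t, (1 + x i)) * ∑ i ∈ t, x i * y i / (1 + x i) := by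
  induction t using Finset.induction_on with
  | empty => simp
  | insert a t ha ih =>
    have hS : ∀ S ∈ t.powerset, (∏ i ∈ insert a S, x i) * ∑ i ∈ insert a S, y i
        = x a * y a * ∏ i ∈ S, x i + x a * ((∏ i ∈ S, x i) * ∑ i ∈ S, y i) := by
      intro S hS
      have haS : a ∉ S := fun h => ha (mem_powerset.mp hS h)
      rw [prod_insert haS, sum_insert haS]
      ring
    rw [sum_powerset_insert ha, sum_congr rfl hS, sum_add_distrib, ← mul_sum, ← mul_sum,
      ← prod_one_add, ih fun i hi => hx i (mem_insert_of_mem hi), prod_insert ha, sum_insert ha]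
    have := hx a (mem_insert_self a t)
    field_simp
    ring

theorem totient_div_eq_prod_one_sub_inv {q : ℕ} (hq : q ≠ 0) :
    (q.totient : ℝ) / q = ∏ p ∈ q.primeFactors, (1 - (p : ℝ)⁻¹) := by
  have h := congrArg (Rat.cast : ℚ → ℝ) (Nat.totient_eq_mul_prod_factors q)
  push_cast at h
  rw [h, mul_div_cancel_left₀ _ (by exact_mod_cast hq)]

theorem sum_divisors_moebius_div_mul_log_s7 {q : ℕ} (hq : q ≠ 0) :
    ∑ d ∈ q.divisors, (μ d : ℝ) / d * log ((q : ℝ) / d)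
      = q.totient / q * (log q + ∑ p ∈ q.primeFactors, log p / (p - 1)) := by
  rw [← sum_filter_of_ne (p := Squarefree) fun d _ h => by_contra fun hd => h (by
      rw [ArithmeticFunction.moebius_eq_zero_of_not_squarefree hd]; simp),
    Nat.sum_divisors_filter_squarefree hq, Nat.factors_eq]
  change ∑ S ∈ q.primeFactors.powerset, _ = _
  have hterm : ∀ S ∈ q.primeFactors.powerset,
      (μ S.val.prod : ℝ) / S.val.prod * log ((q : ℝ) / S.val.prod)
        = log q * ∏ p ∈ S, (-(p : ℝ)⁻¹) - (∏ p ∈ S, (-(p : ℝ)⁻¹)) * ∑ p ∈ S, log p := by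
    intro S hS
    have hSq := mem_powerset.mp hS
    have hp : ∀ p ∈ S, (p : ℝ) ≠ 0 := fun p hpS => by
      exact_mod_cast (Nat.prime_of_mem_primeFactors (hSq hpS)).ne_zero
    have hprod : S.val.prod = ∏ p ∈ S, p := S.prod_val
    rw [hprod, ← ArithmeticFunction.intCoe_apply,
      (ArithmeticFunction.isMultiplicative_moebius.intCast (R := ℝ)).map_prod_of_subset_primeFactors
        q S hSq, Nat.cast_prod, log_div (by exact_mod_cast hq) (prod_ne_zero_iff.mpr hp),
      log_prod hp, prod_congr rfl fun p hpS => by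
        rw [ArithmeticFunction.intCoe_apply,
          ArithmeticFunction.moebius_apply_prime (Nat.prime_of_mem_primeFactors (hSq hpS))],
      ← prod_div_distrib]
    simp only [Int.cast_neg, Int.cast_one, neg_div, one_div]
    ring
  have hp : ∀ p ∈ q.primeFactors, (1 : ℝ) < p := fun p hpq => by
    exact_mod_cast (Nat.prime_of_mem_primeFactors hpq).one_lt
  have hlog : ∀ p ∈ q.primeFactors, -(p : ℝ)⁻¹ * log p / (1 + -(p : ℝ)⁻¹) = -(log p / (p - 1)) :=
    fun p hp' => by
      have := hp p hp'
      have h1 : (p : ℝ) - 1 ≠ 0 := by linarith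
      have h0 : (p : ℝ) ≠ 0 := by positivity
      rw [show 1 + -(p : ℝ)⁻¹ = (p - 1) / p by field_simp; ring]
      field_simp
  rw [sum_congr rfl hterm, sum_sub_distrib, ← mul_sum, ← prod_one_add,
    sum_powerset_prod_mul_sum _ _ _ fun p hp' => by linarith [inv_lt_one_of_one_lt₀ (hp p hp')],
    sum_congr rfl hlog, totient_div_eq_prod_one_sub_inv hq, sum_neg_distrib]
  simp only [← sub_eq_add_neg]
  ring

-- The weight `w_k(r)` of the header; a block is summed over `r = j + 1` with `j ∈ range q`.
noncomputable def blockWeight (q k r : ℕ) : ℝ := ((k * q + r : ℕ) : ℝ)⁻¹ - ((k * q + q : ℕ) : ℝ)⁻¹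

theorem blockWeight_nonneg {q r : ℕ} (hr : 0 < r) (hrq : r ≤ q) (k : ℕ) :
    0 ≤ blockWeight q k r :=
  sub_nonneg.mpr (inv_anti₀ (by positivity) (by gcongr))

theorem blockWeight_pos {q r : ℕ} (hr : 0 < r) (hrq : r < q) (k : ℕ) :
    0 < blockWeight q k r :=
  sub_pos.mpr (inv_strictAnti₀ (by positivity) (by gcongr))

theorem sum_sum_blockWeight_mul {q d m : ℕ} (hdm : d * m = q) (hd : d ≠ 0) (hm : m ≠ 0) (K : ℕ) :
    ∑ k ∈ range K, ∑ s ∈ range m, blockWeight q k (d * (s + 1))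
      = (d : ℝ)⁻¹ * (harmonic (K * m) - harmonic K) := by
  subst hdm
  have hterm : ∀ k s : ℕ, blockWeight (d * m) k (d * (s + 1))
      = (d : ℝ)⁻¹ * (((k * m + s : ℕ) : ℝ) + 1)⁻¹ - (d : ℝ)⁻¹ * ((m : ℝ)⁻¹ * ((k : ℝ) + 1)⁻¹) := by
    intro k s
    simp only [blockWeight]
    push_cast
    field_simp
    ring
  have hm' : (m : ℝ) ≠ 0 := by exact_mod_cast hm
  simp_rw [hterm, sum_sub_distrib, sum_const, card_range, nsmul_eq_mul, ← mul_sum]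
  rw [← sum_range_mul_eq_sum_sum (fun n => ((n : ℝ) + 1)⁻¹)]
  simp only [harmonic]
  push_cast
  field_simp

theorem tendsto_sum_sum_blockWeight {q : ℕ} (hq : q ≠ 0) :
    Tendsto (fun K : ℕ => ∑ k ∈ range K, ∑ j ∈ range q with (j + 1).Coprime q,
        blockWeight q k (j + 1)) atTop
      (𝓝 (q.totient / q * (log q + ∑ p ∈ q.primeFactors, log p / (p - 1)))) := by
  have hK : ∀ K, ∑ k ∈ range K, ∑ j ∈ range q with (j + 1).Coprime q, blockWeight q k (j + 1)
      = ∑ d ∈ q.divisors, (μ d : ℝ) * ((d : ℝ)⁻¹ * (harmonic (K * (q / d)) - harmonic K)) := by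
    intro K
    simp_rw [sum_filter_coprime_eq_sum_moebius hq]
    rw [sum_comm]
    refine sum_congr rfl fun d hd => ?_
    have hdq := Nat.dvd_of_mem_divisors hd
    rw [← mul_sum, sum_sum_blockWeight_mul (Nat.mul_div_cancel' hdq) (ne_zero_of_dvd_ne_zero hq hdq)
      (Nat.div_ne_zero_iff_of_dvd hdq |>.mpr ⟨hq, ne_zero_of_dvd_ne_zero hq hdq⟩)]
  rw [← sum_divisors_moebius_div_mul_log_s7 hq]
  simp_rw [hK]
  refine tendsto_finsetSum _ fun d hd => ?_
  have hdq := Nat.dvd_of_mem_divisors hd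
  have hd0 : d ≠ 0 := ne_zero_of_dvd_ne_zero hq hdq
  have h := ((tendsto_harmonic_mul_sub_harmonic
    (Nat.div_ne_zero_iff_of_dvd hdq |>.mpr ⟨hq, hd0⟩)).const_mul (d : ℝ)⁻¹).const_mul (μ d : ℝ)
  rwa [Nat.cast_div hdq (by exact_mod_cast hd0), ← mul_assoc, ← div_eq_mul_inv] at h

theorem ZMod.sum_range_natCast {M : Type*} [AddCommMonoid M] (q : ℕ) [NeZero q]
    (f : ZMod q → M) : ∑ n ∈ range q, f n = ∑ a, f a :=
  sum_nbij' (↑) ZMod.val (fun _ _ => mem_univ _) (fun a _ => mem_range.mpr a.val_lt)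
    (fun _ hn => ZMod.val_cast_of_lt (mem_range.mp hn)) (fun a _ => ZMod.natCast_zmod_val a)
    (fun _ _ => rfl)

namespace DirichletCharacter

variable {q : ℕ}

theorem norm_natCast_eq_ite (χ : DirichletCharacter ℂ q) (n : ℕ) :
    ‖χ n‖ = if n.Coprime q then 1 else 0 := by
  split_ifs with h
  · have hu := (ZMod.isUnit_iff_coprime n q).mpr h
    rw [← hu.unit_spec, unit_norm_eq_one]
  · rw [χ.map_nonunit (mt (ZMod.isUnit_iff_coprime n q).mp h), norm_zero]

theorem sum_range_natCast_add_one_eq_zero {R : Type*} [CommRing R] [IsDomain R] [NeZero q]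
    {χ : DirichletCharacter R q} (hχ : χ ≠ 1) : ∑ j ∈ range q, χ ((j + 1 : ℕ) : ZMod q) = 0 := by
  simp_rw [Nat.cast_succ]
  rw [ZMod.sum_range_natCast q fun a => χ (a + 1)]
  exact (Equiv.sum_comp (Equiv.addRight 1) _).trans (MulChar.sum_eq_zero_of_ne_one hχ)

theorem sum_range_mul_add_one_div [NeZero q] {χ : DirichletCharacter ℂ q} (hχ : χ ≠ 1) (K : ℕ) :
    ∑ n ∈ range (K * q + 1), χ n / n
      = ∑ k ∈ range K, ∑ j ∈ range q, χ ((j + 1 : ℕ) : ZMod q) * (blockWeight q k (j + 1) : ℂ) := by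
  rw [sum_range_succ', Nat.cast_zero (R := ℂ), div_zero, add_zero, sum_range_mul_eq_sum_sum]
  refine sum_congr rfl fun k _ => ?_
  have hterm : ∀ j : ℕ, χ ((k * q + j + 1 : ℕ) : ZMod q) / ((k * q + j + 1 : ℕ) : ℂ)
      = χ ((j + 1 : ℕ) : ZMod q) * (blockWeight q k (j + 1) : ℂ)
        + χ ((j + 1 : ℕ) : ZMod q) * ((k * q + q : ℕ) : ℂ)⁻¹ := by
    intro j
    have hper : ((k * q + j + 1 : ℕ) : ZMod q) = ((j + 1 : ℕ) : ZMod q) := by simp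
    simp only [blockWeight, Complex.ofReal_sub, Complex.ofReal_inv, Complex.ofReal_natCast, hper]
    ring_nf
  simp_rw [hterm, sum_add_distrib, ← sum_mul, sum_range_natCast_add_one_eq_zero hχ, zero_mul,
    add_zero]

theorem exists_pos_norm_sum_le_sum_blockWeight_sub (hq : 2 ≤ q) {χ : DirichletCharacter ℂ q}
    (hχ : χ ≠ 1) : ∃ δ > 0, ∀ K ≠ 0,
      ‖∑ k ∈ range K, ∑ j ∈ range q, χ ((j + 1 : ℕ) : ZMod q) * (blockWeight q k (j + 1) : ℂ)‖
        ≤ ∑ k ∈ range K, ∑ j ∈ range q with (j + 1).Coprime q, blockWeight q k (j + 1) - δ := by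
  have : NeZero q := ⟨by omega⟩
  obtain ⟨a, ha⟩ := MulChar.ne_one_iff.mp hχ
  set r := (a : ZMod q).val
  have hra : (r : ZMod q) = a := ZMod.natCast_zmod_val _
  have hrq : r < q := ZMod.val_lt _
  have hrcop : r.Coprime q := (ZMod.isUnit_iff_coprime r q).mp (hra ▸ a.isUnit)
  have hr0 : r ≠ 0 := by
    rintro h
    rw [h, Nat.coprime_zero_left] at hrcop
    omega
  have hr1 : r ≠ 1 := by
    rintro h
    apply ha
    rw [← hra, h, Nat.cast_one, map_one]
  -- `δ` is the loss in the triangle inequality between the terms `n = 1` and `n = r` of block `0`.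
  set c : ℕ × ℕ → ℂ := fun kj => χ ((kj.2 + 1 : ℕ) : ZMod q) * (blockWeight q kj.1 (kj.2 + 1) : ℂ)
  have hc0 : c (0, 0) = (blockWeight q 0 1 : ℂ) := by simp [c]
  have hcr : c (0, r - 1) = χ a * (blockWeight q 0 r : ℂ) := by
    simp only [c, Nat.sub_add_cancel (Nat.pos_of_ne_zero hr0), hra]
  refine ⟨‖c (0, 0)‖ + ‖c (0, r - 1)‖ - ‖c (0, 0) + c (0, r - 1)‖, ?_, fun K hK => ?_⟩
  · rw [gt_iff_lt, sub_pos, hc0, hcr]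
    refine norm_add_lt_of_not_sameRay
      (Complex.not_sameRay_ofReal_mul ?_ ?_ (χ.unit_norm_eq_one a) ha)
    · exact blockWeight_pos one_pos (by omega) 0
    · exact blockWeight_pos (Nat.pos_of_ne_zero hr0) hrq 0
  · have hnorm : ∑ kj ∈ range K ×ˢ range q, ‖c kj‖
        = ∑ k ∈ range K, ∑ j ∈ range q with (j + 1).Coprime q, blockWeight q k (j + 1) := by
      rw [sum_product]
      refine sum_congr rfl fun k _ => ?_
      rw [sum_filter]
      refine sum_congr rfl fun j hj => ?_
      rw [norm_mul, norm_natCast_eq_ite, Complex.norm_real,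
        Real.norm_of_nonneg (blockWeight_nonneg j.succ_pos (mem_range.mp hj) k)]
      split_ifs <;> simp
    rw [← hnorm, ← sum_product' (f := fun k j => c (k, j))]
    exact norm_sum_le_sum_norm_sub_of_ne c (by simp; omega) (by simp; omega) (by simp; omega)

end DirichletCharacter

theorem stmt_7 (q : ℕ) (hq : 2 ≤ q) (χ : DirichletCharacter ℂ q) (hχ : χ ≠ 1) (L : ℂ)
    (hL : Tendsto (fun N : ℕ => ∑ n ∈ Finset.range N, χ (n : ZMod q) / n)
      atTop (nhds L)) :
    ‖L‖ < ((Nat.totient q : ℝ) / q) *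
      (Real.log q + ∑ p ∈ q.primeFactors, Real.log p / (p - 1)) := by
  have hq0 : q ≠ 0 := by omega
  have : NeZero q := ⟨hq0⟩
  obtain ⟨δ, hδ, hbound⟩ := DirichletCharacter.exists_pos_norm_sum_le_sum_blockWeight_sub hq hχ
  have hblocks : Tendsto (fun K : ℕ => ∑ k ∈ range K, ∑ j ∈ range q,
      χ ((j + 1 : ℕ) : ZMod q) * (blockWeight q k (j + 1) : ℂ)) atTop (𝓝 L) :=
    (hL.comp ((tendsto_add_atTop_nat 1).comp (tendsto_id.atTop_mul_const' (by omega)))).congr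
      (DirichletCharacter.sum_range_mul_add_one_div hχ)
  have hle := le_of_tendsto_of_tendsto hblocks.norm
    ((tendsto_sum_sum_blockWeight hq0).sub_const δ)
    ((eventually_ne_atTop 0).mono hbound)
  linarith
end
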